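/- Let 0 < s < 1, let γ ∈ L^∞(ℝ^n) with γ ≥ γ₀ > 0, and suppose γ is continuous at x₀ ∈ ℝ^n. Let (φ_N) ⊂ C_c^∞(ℝ^n) satisfy: ‖(-Δ)^{s/2} φ_N‖_{L^2}^2 + ‖φ_N‖_{L^2}^2 = 1 for all N, ‖φ_N‖_{L^2} → 0, and supp φ_N ⊂ B_{1/N}(x₀). Then the weighted energy E_γ(φ_N) := ∫_{ℝ^{2n}} γ^{1/2}(x) γ^{1/2}(y) |∇^s φ_N(x,y)|^2 dx dy converges to γ(x₀) as N → ∞. -/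

import Mathlib

set_option maxHeartbeats 1000000

open MeasureTheory Filter Topology

/-- The fractional gradient of order `s`. -/
noncomputable def fracGrad (n : ℕ) (s C : ℝ) (u : EuclideanSpace ℝ (Fin n) → ℝ) :
    EuclideanSpace ℝ (Fin n) × EuclideanSpace ℝ (Fin n) → EuclideanSpace ℝ (Fin n) :=
  fun p => (Real.sqrt (C / 2) * (u p.1 - u p.2) / ‖p.1 - p.2‖ ^ ((n : ℝ) / 2 + s + 1)) • (p.1 - p.2)

/-- The constant `C_{n,s} = 4ˢ Γ(n/2+s) / (π^{n/2} |Γ(-s)|)`. -/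
noncomputable def Cns (n : ℕ) (s : ℝ) : ℝ :=
  4 ^ s * Real.Gamma ((n : ℝ) / 2 + s) / (Real.pi ^ ((n : ℝ) / 2) * |Real.Gamma (-s)|)

lemma fracGrad_zero (n : ℕ) (s C : ℝ) (u : EuclideanSpace ℝ (Fin n) → ℝ)
    (p : EuclideanSpace ℝ (Fin n) × EuclideanSpace ℝ (Fin n)) (h : u p.1 = u p.2) :
    fracGrad n s C u p = 0 := by
  simp [fracGrad, h, sub_self]

lemma fracGrad_sq (n : ℕ) (s C : ℝ) (hC : 0 ≤ C) (u : EuclideanSpace ℝ (Fin n) → ℝ)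
    (p : EuclideanSpace ℝ (Fin n) × EuclideanSpace ℝ (Fin n)) (hv : p.1 - p.2 ≠ 0) :
    ‖fracGrad n s C u p‖ ^ 2
      = C / 2 * (u p.1 - u p.2) ^ 2 * ‖p.1 - p.2‖ ^ (-((n : ℝ) + 2 * s)) := by
  have hx : (0:ℝ) < ‖p.1 - p.2‖ := norm_pos_iff.mpr hv
  set x := ‖p.1 - p.2‖ with hxdef
  set κ := (n : ℝ) / 2 + s + 1 with hκ
  have h1 : ‖fracGrad n s C u p‖ ^ 2
      = (Real.sqrt (C / 2) * (u p.1 - u p.2) / x ^ κ) ^ 2 * x ^ 2 := by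
    rw [fracGrad, norm_smul, mul_pow, Real.norm_eq_abs, sq_abs]
  have h2 : (Real.sqrt (C / 2) * (u p.1 - u p.2) / x ^ κ) ^ 2
      = C / 2 * (u p.1 - u p.2) ^ 2 / x ^ (κ * 2) := by
    rw [div_pow, mul_pow, Real.sq_sqrt (by positivity)]
    congr 1
    rw [← Real.rpow_natCast (x ^ κ) 2, ← Real.rpow_mul hx.le]
    norm_num
  have h3 : (x : ℝ) ^ (2:ℕ) = x ^ ((2:ℕ) : ℝ) := (Real.rpow_natCast x 2).symm
  rw [h1, h2, h3, div_mul_eq_mul_div, mul_div_assoc, ← Real.rpow_sub hx]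
  congr 1
  rw [hκ]
  push_cast
  ring

lemma fracGrad_meas (n : ℕ) (s C : ℝ) (hs : 0 ≤ s) (u : EuclideanSpace ℝ (Fin n) → ℝ)
    (hu : Continuous u) :
    Measurable (fun p => ‖fracGrad n s C u p‖ ^ 2) := by
  unfold fracGrad
  have hsub : Measurable fun p : EuclideanSpace ℝ (Fin n) × EuclideanSpace ℝ (Fin n) =>
      p.1 - p.2 := (measurable_fst.sub measurable_snd)
  have h1 : Measurable fun p : EuclideanSpace ℝ (Fin n) × EuclideanSpace ℝ (Fin n) =>
      Real.sqrt (C / 2) * (u p.1 - u p.2) / ‖p.1 - p.2‖ ^ ((n : ℝ) / 2 + s + 1) := by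
    apply Measurable.div
    · exact (measurable_const.mul ((hu.measurable.comp measurable_fst).sub
        (hu.measurable.comp measurable_snd)))
    · have : Continuous fun p : EuclideanSpace ℝ (Fin n) × EuclideanSpace ℝ (Fin n) =>
          ‖p.1 - p.2‖ ^ ((n : ℝ) / 2 + s + 1) :=
        Continuous.rpow_const (continuous_fst.sub continuous_snd).norm
          (fun x => Or.inr (add_nonneg (add_nonneg (by positivity) hs) zero_le_one))
      exact this.measurable
  exact ((h1.smul hsub).norm).pow measurable_const

noncomputable def kern (n : ℕ) (s r : ℝ) (z : EuclideanSpace ℝ (Fin n)) : ℝ :=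
  Set.indicator {z : EuclideanSpace ℝ (Fin n) | r ≤ ‖z‖} (fun z => ‖z‖ ^ (-((n:ℝ) + 2 * s))) z

lemma kern_nonneg (n : ℕ) (s r : ℝ) (z : EuclideanSpace ℝ (Fin n)) : 0 ≤ kern n s r z := by
  unfold kern
  apply Set.indicator_nonneg
  intro z _
  positivity

lemma kern_neg (n : ℕ) (s r : ℝ) (z : EuclideanSpace ℝ (Fin n)) :
    kern n s r (-z) = kern n s r z := by
  unfold kern
  simp [Set.indicator_apply, norm_neg]

lemma kern_meas (n : ℕ) (s r : ℝ) (hs : 0 < s) : Measurable (kern n s r) := by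
  unfold kern
  apply Measurable.indicator _ (isClosed_le continuous_const continuous_norm).measurableSet
  have heq : (fun z : EuclideanSpace ℝ (Fin n) => ‖z‖ ^ (-((n:ℝ) + 2 * s)))
      = fun z => (‖z‖ ^ ((n:ℝ) + 2 * s))⁻¹ := by
    funext z
    rw [Real.rpow_neg (norm_nonneg z)]
  rw [heq]
  exact (Continuous.rpow_const continuous_norm (fun x => Or.inr (by positivity))).measurable.inv

lemma kern_integrable (n : ℕ) (s r : ℝ) (hs : 0 < s) (hr : 0 < r) :
    Integrable (kern n s r) := by
  set a := (n:ℝ) + 2 * s with ha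
  have hapos : 0 < a := by positivity
  have hna : (Module.finrank ℝ (EuclideanSpace ℝ (Fin n)) : ℝ) < a := by
    rw [finrank_euclideanSpace_fin]; simp [ha]; linarith
  have base := (integrable_one_add_norm (E := EuclideanSpace ℝ (Fin n))
    (μ := volume) (r := a) hna).const_mul ((1 + 1/r) ^ a)
  refine base.mono' (kern_meas n s r hs).aestronglyMeasurable ?_
  filter_upwards with z
  rw [Real.norm_eq_abs, abs_of_nonneg (kern_nonneg n s r z)]
  unfold kern
  rw [Set.indicator_apply]
  split_ifs with hz
  · have hz' : r ≤ ‖z‖ := hz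
    have hzpos : 0 < ‖z‖ := lt_of_lt_of_le hr hz'
    have key : (1 + ‖z‖) ^ a ≤ ((1 + 1/r) * ‖z‖) ^ a := by
      apply Real.rpow_le_rpow (by positivity)
      · rw [add_mul, one_mul]
        have : 1 ≤ ‖z‖ / r := (one_le_div hr).mpr hz'
        have h2 : 1 / r * ‖z‖ = ‖z‖ / r := by ring
        rw [h2]
        linarith
      · exact hapos.le
    rw [Real.mul_rpow (by positivity) hzpos.le] at key
    rw [Real.rpow_neg (norm_nonneg z), Real.rpow_neg (by positivity : (0:ℝ) ≤ 1 + ‖z‖)]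
    have hx : (0:ℝ) < ‖z‖ ^ ((n:ℝ) + 2*s) := Real.rpow_pos_of_pos hzpos _
    have hy : (0:ℝ) < (1 + ‖z‖) ^ ((n:ℝ) + 2*s) := Real.rpow_pos_of_pos (by positivity) _
    rw [← div_eq_mul_inv, inv_eq_one_div, div_le_div_iff₀ hx hy]
    have ha2 : ((n:ℝ) + 2*s) = a := rfl
    nlinarith [key]
  · positivity

section prodkern
variable {n : ℕ}
local notation "E" => EuclideanSpace ℝ (Fin n)

lemma prod_kern_left (f h : E → ℝ) (hfi : Integrable f) (hfm : Measurable f)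
    (hhi : Integrable h) (hhm : Measurable h) :
    Integrable (fun p : E × E => f p.1 * h (p.1 - p.2)) ∧
      ∫ p : E × E, f p.1 * h (p.1 - p.2) = (∫ x, f x) * ∫ z, h z := by
  have hPm : AEStronglyMeasurable (fun p : E × E => f p.1 * h (p.1 - p.2))
      (volume.prod volume) :=
    (((hfm.comp measurable_fst).mul
      (hhm.comp (measurable_fst.sub measurable_snd)))).aestronglyMeasurable
  have h2' : (fun x : E => ∫ y : E, ‖f x * h (x - y)‖) = fun x => ‖f x‖ * ∫ z, ‖h z‖ := by
    funext x
    simp_rw [norm_mul]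
    rw [integral_const_mul, integral_sub_left_eq_self (fun z => ‖h z‖) volume x]
  have hint : Integrable (fun p : E × E => f p.1 * h (p.1 - p.2)) (volume.prod volume) := by
    rw [integrable_prod_iff hPm]
    constructor
    · filter_upwards with x
      exact (hhi.comp_sub_left x).const_mul (f x)
    · rw [h2']
      exact hfi.norm.mul_const _
  constructor
  · rwa [MeasureTheory.Measure.volume_eq_prod]
  · rw [MeasureTheory.Measure.volume_eq_prod, integral_prod _ hint]
    have : ∀ x : E, ∫ y : E, f x * h (x - y) = f x * ∫ z, h z := by
      intro x
      rw [integral_const_mul, integral_sub_left_eq_self h volume x]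
    simp_rw [this]
    rw [integral_mul_const]

lemma prod_kern_right (f h : E → ℝ) (hfi : Integrable f) (hfm : Measurable f)
    (hhi : Integrable h) (hhm : Measurable h) (hev : ∀ z, h (-z) = h z) :
    Integrable (fun p : E × E => f p.2 * h (p.1 - p.2)) ∧
      ∫ p : E × E, f p.2 * h (p.1 - p.2) = (∫ x, f x) * ∫ z, h z := by
  obtain ⟨h1, h2⟩ := prod_kern_left f h hfi hfm hhi hhm
  have hswap : (fun p : E × E => f p.2 * h (p.1 - p.2))
      = (fun p : E × E => f p.1 * h (p.1 - p.2)) ∘ Prod.swap := by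
    funext p
    simp only [Function.comp_apply, Prod.fst_swap, Prod.snd_swap]
    rw [← hev (p.1 - p.2), neg_sub]
  rw [MeasureTheory.Measure.volume_eq_prod] at h1 ⊢
  constructor
  · rw [hswap]; exact h1.swap
  · rw [hswap, ← h2, MeasureTheory.Measure.volume_eq_prod]
    exact integral_prod_swap (fun p : E × E => f p.1 * h (p.1 - p.2))
      (μ := volume) (ν := volume)

end prodkern

/-- **Energy concentration property**: for a bounded conductivity `γ ≥ γ₀ > 0` continuous
at `x₀`, and a normalized sequence `φ_N ∈ C_c^∞` with `‖φ_N‖_{L²} → 0` and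
`supp φ_N ⊆ B_{1/N}(x₀)` (normalization `‖(-Δ)^{s/2}φ_N‖² + ‖φ_N‖² = 1`, expressed via
the identity `‖(-Δ)^{s/2}φ‖² = ∫ |∇ˢφ|²`), the weighted energies
`E_γ(φ_N) = ∫ γ^{1/2}(x)γ^{1/2}(y)|∇ˢφ_N(x,y)|² dxdy` converge to `γ(x₀)`. -/
theorem energy_concentration (n : ℕ) (hn : 0 < n) (s : ℝ) (hs : 0 < s) (hs1 : s < 1)
    (γ : EuclideanSpace ℝ (Fin n) → ℝ) (hγm : Measurable γ)
    (γ₀ M : ℝ) (hγ₀ : 0 < γ₀) (hlb : ∀ x, γ₀ ≤ γ x) (hub : ∀ x, γ x ≤ M)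
    (x₀ : EuclideanSpace ℝ (Fin n)) (hcont : ContinuousAt γ x₀)
    (φ : ℕ → EuclideanSpace ℝ (Fin n) → ℝ)
    (hsm : ∀ N, ContDiff ℝ (⊤ : ℕ∞) (φ N)) (hc : ∀ N, HasCompactSupport (φ N))
    (hnorm : ∀ N, (∫ p : EuclideanSpace ℝ (Fin n) × EuclideanSpace ℝ (Fin n),
          ‖fracGrad n s (Cns n s) (φ N) p‖ ^ 2) + ∫ x, (φ N x) ^ 2 = 1)
    (hL2 : Tendsto (fun N => ∫ x, (φ N x) ^ 2) atTop (nhds 0))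
    (hsupp : ∀ N : ℕ, 0 < N → tsupport (φ N) ⊆ Metric.ball x₀ (1 / N)) :
    Tendsto (fun N => ∫ p : EuclideanSpace ℝ (Fin n) × EuclideanSpace ℝ (Fin n),
        Real.sqrt (γ p.1) * Real.sqrt (γ p.2) * ‖fracGrad n s (Cns n s) (φ N) p‖ ^ 2)
      atTop (nhds (γ x₀)) := by
  classical
  set C := Cns n s with hCdef
  have hC : 0 ≤ C := by
    rw [hCdef, Cns]
    apply div_nonneg
    · apply mul_nonneg (by positivity)
      exact (Real.Gamma_pos_of_pos (add_pos_of_nonneg_of_pos (by positivity) hs)).le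
    · exact mul_nonneg (Real.rpow_nonneg Real.pi_pos.le _) (abs_nonneg _)
  set g : ℕ → EuclideanSpace ℝ (Fin n) × EuclideanSpace ℝ (Fin n) → ℝ :=
    fun N p => ‖fracGrad n s C (φ N) p‖ ^ 2 with hgdef
  have hgm : ∀ N, Measurable (g N) := fun N =>
    fracGrad_meas n s C hs.le (φ N) (hsm N).continuous
  have hgnn : ∀ N p, 0 ≤ g N p := fun N p => sq_nonneg _
  have hfi : ∀ N, Integrable (fun x => (φ N x) ^ 2) := by
    intro N
    have hcs : HasCompactSupport (fun x => (φ N x) ^ 2) := by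
      have : (fun x => (φ N x) ^ 2) = (φ N * φ N) := by funext x; simp [sq]
      rw [this]
      exact (hc N).mul_right
    exact (((hsm N).continuous.pow 2)).integrable_of_hasCompactSupport hcs
  have hfm : ∀ N, Measurable (fun x => (φ N x) ^ 2) := fun N =>
    ((hsm N).continuous.pow 2).measurable
  have hfnn : ∀ N, 0 ≤ ∫ x, (φ N x) ^ 2 := fun N => integral_nonneg fun x => sq_nonneg _
  have hIg : ∀ N, ∫ p, g N p = 1 - ∫ x, (φ N x) ^ 2 := fun N => by
    have := hnorm N
    linarith
  -- the weight
  set w : EuclideanSpace ℝ (Fin n) × EuclideanSpace ℝ (Fin n) → ℝ :=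
    fun p => Real.sqrt (γ p.1) * Real.sqrt (γ p.2) with hwdef
  have hγnn : ∀ x, 0 ≤ γ x := fun x => le_trans hγ₀.le (hlb x)
  have hγ0M : γ₀ ≤ M := le_trans (hlb x₀) (hub x₀)
  have hM : 0 < M := lt_of_lt_of_le hγ₀ hγ0M
  have hwnn : ∀ p, 0 ≤ w p := fun p => mul_nonneg (Real.sqrt_nonneg _) (Real.sqrt_nonneg _)
  have hwle : ∀ p, w p ≤ M := by
    intro p
    calc w p ≤ Real.sqrt M * Real.sqrt M := by
            apply mul_le_mul (Real.sqrt_le_sqrt (hub _)) (Real.sqrt_le_sqrt (hub _))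
              (Real.sqrt_nonneg _) (Real.sqrt_nonneg _)
      _ = M := Real.mul_self_sqrt hM.le
  have hwm : Measurable w :=
    ((hγm.comp measurable_fst).sqrt).mul ((hγm.comp measurable_snd).sqrt)
  rw [Metric.tendsto_nhds]
  intro ε hε
  -- continuity of γ at x₀
  set ε₂ := ε * Real.sqrt γ₀ / (8 * (Real.sqrt M + 1)) with hε₂def
  have hε₂pos : 0 < ε₂ := by
    rw [hε₂def]
    have h1 : 0 < Real.sqrt γ₀ := Real.sqrt_pos.mpr hγ₀
    have h2 : 0 ≤ Real.sqrt M := Real.sqrt_nonneg M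
    positivity
  obtain ⟨δ, hδpos, hδ⟩ := Metric.continuousAt_iff.mp hcont ε₂ hε₂pos
  -- weight estimate on the ball
  have hwA : ∀ a b : EuclideanSpace ℝ (Fin n), a ∈ Metric.ball x₀ δ → b ∈ Metric.ball x₀ δ →
      |Real.sqrt (γ a) * Real.sqrt (γ b) - γ x₀| ≤ ε / 4 := by
    intro a b ha hb
    have hγa : |γ a - γ x₀| < ε₂ := by
      have := hδ (Metric.mem_ball.mp ha)
      rwa [Real.dist_eq] at this
    have hγb : |γ b - γ x₀| < ε₂ := by
      have := hδ (Metric.mem_ball.mp hb)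
      rwa [Real.dist_eq] at this
    set sa := Real.sqrt (γ a)
    set sb := Real.sqrt (γ b)
    set s0 := Real.sqrt (γ x₀)
    set sγ := Real.sqrt γ₀
    set sM := Real.sqrt M
    have hsγpos : 0 < sγ := Real.sqrt_pos.mpr hγ₀
    have hsa_lb : sγ ≤ sa := Real.sqrt_le_sqrt (hlb a)
    have hsb_lb : sγ ≤ sb := Real.sqrt_le_sqrt (hlb b)
    have hs0_lb : sγ ≤ s0 := Real.sqrt_le_sqrt (hlb x₀)
    have hsa_ub : sa ≤ sM := Real.sqrt_le_sqrt (hub a)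
    have hsb_ub : sb ≤ sM := Real.sqrt_le_sqrt (hub b)
    have hs0_ub : s0 ≤ sM := Real.sqrt_le_sqrt (hub x₀)
    have hsa_sq : sa ^ 2 = γ a := Real.sq_sqrt (hγnn a)
    have hsb_sq : sb ^ 2 = γ b := Real.sq_sqrt (hγnn b)
    have hs0_sq : s0 ^ 2 = γ x₀ := Real.sq_sqrt (hγnn x₀)
    have key : ∀ t t0 : ℝ, sγ ≤ t → sγ ≤ t0 → t ^ 2 - t0 ^ 2 = (t - t0) * (t + t0) →
        |t - t0| * sγ ≤ |t ^ 2 - t0 ^ 2| := by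
      intro t t0 ht ht0 hident
      rw [hident, abs_mul]
      have h1 : 0 ≤ t + t0 := by linarith [hsγpos.le]
      rw [abs_of_nonneg h1]
      apply mul_le_mul_of_nonneg_left _ (abs_nonneg _)
      linarith
    have d1 : |sa - s0| ≤ ε₂ / sγ := by
      rw [le_div_iff₀ hsγpos]
      calc |sa - s0| * sγ ≤ |sa ^ 2 - s0 ^ 2| := key sa s0 hsa_lb hs0_lb (by ring)
        _ = |γ a - γ x₀| := by rw [hsa_sq, hs0_sq]
        _ ≤ ε₂ := hγa.le
    have d2 : |sb - s0| ≤ ε₂ / sγ := by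
      rw [le_div_iff₀ hsγpos]
      calc |sb - s0| * sγ ≤ |sb ^ 2 - s0 ^ 2| := key sb s0 hsb_lb hs0_lb (by ring)
        _ = |γ b - γ x₀| := by rw [hsb_sq, hs0_sq]
        _ ≤ ε₂ := hγb.le
    have habs : |sa * sb - γ x₀| ≤ |sa - s0| * sb + s0 * |sb - s0| := by
      have hident : sa * sb - γ x₀ = (sa - s0) * sb + s0 * (sb - s0) := by
        rw [← hs0_sq]; ring
      rw [hident]
      calc |(sa - s0) * sb + s0 * (sb - s0)| ≤ |(sa - s0) * sb| + |s0 * (sb - s0)| := abs_add_le _ _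
        _ = |sa - s0| * sb + s0 * |sb - s0| := by
            rw [abs_mul, abs_mul, abs_of_nonneg (by linarith [hsγpos.le] : (0:ℝ) ≤ sb),
              abs_of_nonneg (by linarith [hsγpos.le] : (0:ℝ) ≤ s0)]
    have hbound : |sa - s0| * sb + s0 * |sb - s0| ≤ 2 * sM * (ε₂ / sγ) := by
      have h1 : |sa - s0| * sb ≤ (ε₂ / sγ) * sM := by
        apply mul_le_mul d1 hsb_ub (by linarith [hsγpos.le]) (by positivity)
      have h2 : s0 * |sb - s0| ≤ sM * (ε₂ / sγ) := by
        apply mul_le_mul hs0_ub d2 (abs_nonneg _) (by positivity)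
      linarith
    have hfinal : 2 * sM * (ε₂ / sγ) ≤ ε / 4 := by
      rw [hε₂def]
      have hsM : 0 ≤ sM := Real.sqrt_nonneg M
      have hexp : 2 * sM * (ε * sγ / (8 * (sM + 1)) / sγ) = ε * (sM / (sM + 1)) / 4 := by
        field_simp
        ring
      rw [hexp]
      have hq : sM / (sM + 1) ≤ 1 := by
        rw [div_le_one (by linarith)]
        linarith
      calc ε * (sM / (sM + 1)) / 4 ≤ ε * 1 / 4 := by gcongr
        _ = ε / 4 := by ring
    linarith [habs, hbound, hfinal]
  -- the kernel
  set r := δ / 2 with hrdef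
  have hrpos : 0 < r := by positivity
  have hker_i := kern_integrable n s r hs hrpos
  set Ih := ∫ z, kern n s r z with hIhdef
  have hIhnn : 0 ≤ Ih := integral_nonneg (kern_nonneg n s r)
  set K := (M + γ x₀) * C * Ih + γ x₀ with hKdef
  have hKnn : 0 ≤ K := by
    apply add_nonneg _ (hγnn x₀)
    apply mul_nonneg (mul_nonneg (by linarith [hγnn x₀]) hC) hIhnn
  -- eventual bounds
  have hev1 : ∀ᶠ N in atTop, (∫ x, (φ N x) ^ 2) < min (1/2) (ε / (4 * (K + 1))) := by
    apply hL2.eventually_lt_const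
    apply lt_min (by norm_num)
    positivity
  have hev2 : ∀ᶠ N : ℕ in atTop, (1 : ℝ) / N < r := by
    have : Tendsto (fun N : ℕ => (1 : ℝ) / N) atTop (nhds 0) :=
      tendsto_one_div_atTop_nhds_zero_nat
    exact this.eventually_lt_const hrpos
  filter_upwards [hev1, hev2, eventually_gt_atTop 0] with N hsmall hNr hN0
  -- fixed N from here on
  set Iφ := ∫ x, (φ N x) ^ 2 with hIφdef
  have hIφ_half : Iφ < 1 / 2 := lt_of_lt_of_le hsmall (min_le_left _ _)
  have hIφ_eps : Iφ < ε / (4 * (K + 1)) := lt_of_lt_of_le hsmall (min_le_right _ _)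
  have hIgN : ∫ p, g N p = 1 - Iφ := hIg N
  have hgint : Integrable (g N) := by
    by_contra hcon
    rw [integral_undef hcon] at hIgN
    linarith
  have hwg_int : Integrable (fun p => w p * g N p) := by
    apply hgint.bdd_mul (c := M) hwm.aestronglyMeasurable
    exact Filter.Eventually.of_forall fun p => by rw [Real.norm_eq_abs, abs_of_nonneg (hwnn p)]; exact hwle p
  -- support facts
  have hsupp' : tsupport (φ N) ⊆ Metric.ball x₀ r :=
    subset_trans (hsupp N hN0) (Metric.ball_subset_ball hNr.le)
  have hsuppδ : tsupport (φ N) ⊆ Metric.ball x₀ δ :=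
    subset_trans hsupp' (Metric.ball_subset_ball (by linarith))
  -- the region A
  set A := (Metric.ball x₀ δ) ×ˢ (Metric.ball x₀ δ) with hAdef
  have hAm : MeasurableSet A := measurableSet_ball.prod measurableSet_ball
  -- the dominating kernel function
  set P : EuclideanSpace ℝ (Fin n) × EuclideanSpace ℝ (Fin n) → ℝ :=
    fun p => C / 2 * ((φ N p.1) ^ 2 + (φ N p.2) ^ 2) * kern n s r (p.1 - p.2) with hPdef
  have hPnn : ∀ p, 0 ≤ P p := by
    intro p
    apply mul_nonneg (mul_nonneg (by linarith) (by positivity)) (kern_nonneg n s r _)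
  -- key pointwise bound outside A
  have hkey : ∀ p, p ∉ A → g N p ≤ P p := by
    intro p hp
    by_cases hd : φ N p.1 = φ N p.2
    · rw [hgdef]
      simp only []
      rw [fracGrad_zero n s C (φ N) p hd]
      simpa using hPnn p
    · have hmem : p.1 ∈ tsupport (φ N) ∨ p.2 ∈ tsupport (φ N) := by
        by_contra hcon
        push_neg at hcon
        exact hd (by rw [image_eq_zero_of_notMem_tsupport hcon.1,
          image_eq_zero_of_notMem_tsupport hcon.2])
      have hnotboth : ¬(p.1 ∈ Metric.ball x₀ δ ∧ p.2 ∈ Metric.ball x₀ δ) := by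
        simpa [hAdef, Set.mem_prod] using hp
      have main : ∀ l₁ l₂ : EuclideanSpace ℝ (Fin n), l₁ ∈ tsupport (φ N) →
          l₂ ∉ Metric.ball x₀ δ → r ≤ ‖l₁ - l₂‖ ∧ φ N l₂ = 0 := by
        intro l₁ l₂ hl₁ hl₂
        constructor
        · have h1 : dist l₁ x₀ < r := Metric.mem_ball.mp (hsupp' hl₁)
          have h2 : δ ≤ dist l₂ x₀ := le_of_not_gt (by simpa [Metric.mem_ball] using hl₂)
          have h3 : dist l₂ x₀ ≤ dist l₂ l₁ + dist l₁ x₀ := dist_triangle _ _ _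
          have h4 : ‖l₁ - l₂‖ = dist l₁ l₂ := (dist_eq_norm _ _).symm
          rw [h4, dist_comm]
          rw [hrdef] at *
          linarith
        · exact image_eq_zero_of_notMem_tsupport fun hmem2 => hl₂ (hsuppδ hmem2)
      rcases hmem with h1 | h2
      · have hp2 : p.2 ∉ Metric.ball x₀ δ := by
          intro hmem2
          exact hnotboth ⟨hsuppδ h1, hmem2⟩
        obtain ⟨hdist, hzero⟩ := main p.1 p.2 h1 hp2
        have hvne : p.1 - p.2 ≠ 0 :=
          norm_pos_iff.mp (lt_of_lt_of_le hrpos hdist)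
        rw [hgdef]
        simp only []
        rw [fracGrad_sq n s C hC (φ N) p hvne, hPdef]
        simp only []
        rw [kern, Set.indicator_of_mem
          (show p.1 - p.2 ∈ {z : EuclideanSpace ℝ (Fin n) | r ≤ ‖z‖} from hdist)]
        apply mul_le_mul_of_nonneg_right _ (by positivity)
        apply mul_le_mul_of_nonneg_left _ (by linarith)
        rw [hzero, sub_zero]
        nlinarith [sq_nonneg (φ N p.2)]
      · have hp1 : p.1 ∉ Metric.ball x₀ δ := by
          intro hmem1
          exact hnotboth ⟨hmem1, hsuppδ h2⟩
        obtain ⟨hdist, hzero⟩ := main p.2 p.1 h2 hp1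
        have hdist' : r ≤ ‖p.1 - p.2‖ := by rwa [norm_sub_rev] at hdist
        have hvne : p.1 - p.2 ≠ 0 :=
          norm_pos_iff.mp (lt_of_lt_of_le hrpos hdist')
        rw [hgdef]
        simp only []
        rw [fracGrad_sq n s C hC (φ N) p hvne, hPdef]
        simp only []
        rw [kern, Set.indicator_of_mem
          (show p.1 - p.2 ∈ {z : EuclideanSpace ℝ (Fin n) | r ≤ ‖z‖} from hdist')]
        apply mul_le_mul_of_nonneg_right _ (by positivity)
        apply mul_le_mul_of_nonneg_left _ (by linarith)
        rw [hzero, zero_sub]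
        nlinarith [sq_nonneg (φ N p.1)]
  -- integrability and integral of P
  obtain ⟨hP1i, hP1v⟩ := prod_kern_left (fun x => (φ N x) ^ 2) (kern n s r)
    (hfi N) (hfm N) hker_i (kern_meas n s r hs)
  obtain ⟨hP2i, hP2v⟩ := prod_kern_right (fun x => (φ N x) ^ 2) (kern n s r)
    (hfi N) (hfm N) hker_i (kern_meas n s r hs) (kern_neg n s r)
  have hPexp : P = fun p => C / 2 * ((φ N p.1) ^ 2 * kern n s r (p.1 - p.2))
      + C / 2 * ((φ N p.2) ^ 2 * kern n s r (p.1 - p.2)) := by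
    funext p
    rw [hPdef]
    ring
  have hPi : Integrable P := by
    rw [hPexp]
    exact (hP1i.const_mul _).add (hP2i.const_mul _)
  have hPint : ∫ p, P p = C * Iφ * Ih := by
    rw [hPexp, integral_add (hP1i.const_mul _) (hP2i.const_mul _),
      integral_const_mul, integral_const_mul, hP1v, hP2v]
    ring
  -- splitting the integral
  have hsub_int : Integrable (fun p => (w p - γ x₀) * g N p) := by
    have h1 := hwg_int.sub (hgint.const_mul (γ x₀))
    have heq : (fun p => (w p - γ x₀) * g N p)
        = fun p => w p * g N p - γ x₀ * g N p := by funext p; ring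
    rwa [heq]
  have hEdiff : (∫ p, w p * g N p) - γ x₀ * (1 - Iφ) = ∫ p, (w p - γ x₀) * g N p := by
    have heq : (fun p => (w p - γ x₀) * g N p)
        = fun p => w p * g N p - γ x₀ * g N p := by funext p; ring
    rw [heq, integral_sub hwg_int (hgint.const_mul (γ x₀)), integral_const_mul, hIgN]
  have hsplit : ∫ p, (w p - γ x₀) * g N p
      = (∫ p in A, (w p - γ x₀) * g N p) + ∫ p in Aᶜ, (w p - γ x₀) * g N p :=
    (integral_add_compl hAm hsub_int).symm
  -- bound on A
  have hboundA : |∫ p in A, (w p - γ x₀) * g N p| ≤ ε / 4 := by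
    have h1 : |∫ p in A, (w p - γ x₀) * g N p| ≤ ∫ p in A, |(w p - γ x₀) * g N p| := by
      simpa only [Real.norm_eq_abs] using
        norm_integral_le_integral_norm (μ := volume.restrict A)
          (fun p => (w p - γ x₀) * g N p)
    have h2 : ∫ p in A, |(w p - γ x₀) * g N p| ≤ ∫ p in A, ε / 4 * g N p := by
      apply setIntegral_mono_on (hsub_int.abs.integrableOn)
        ((hgint.const_mul (ε / 4)).integrableOn) hAm
      intro p hp
      rw [abs_mul, abs_of_nonneg (hgnn N p)]
      apply mul_le_mul_of_nonneg_right _ (hgnn N p)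
      obtain ⟨hp1, hp2⟩ := hp
      exact hwA p.1 p.2 hp1 hp2
    have h3 : ∫ p in A, ε / 4 * g N p = ε / 4 * ∫ p in A, g N p := integral_const_mul _ _
    have h4 : ∫ p in A, g N p ≤ ∫ p, g N p :=
      setIntegral_le_integral hgint (Filter.Eventually.of_forall (hgnn N))
    have h5 : ∫ p, g N p ≤ 1 := by rw [hIgN]; linarith [hfnn N]
    calc |∫ p in A, (w p - γ x₀) * g N p| ≤ ∫ p in A, |(w p - γ x₀) * g N p| := h1
      _ ≤ ∫ p in A, ε / 4 * g N p := h2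
      _ = ε / 4 * ∫ p in A, g N p := h3
      _ ≤ ε / 4 * 1 := by
          apply mul_le_mul_of_nonneg_left _ (by linarith)
          exact le_trans h4 h5
      _ = ε / 4 := by ring
  -- bound on Aᶜ
  have hboundAc : |∫ p in Aᶜ, (w p - γ x₀) * g N p| ≤ (M + γ x₀) * (C * Iφ * Ih) := by
    have h1 : |∫ p in Aᶜ, (w p - γ x₀) * g N p| ≤ ∫ p in Aᶜ, |(w p - γ x₀) * g N p| := by
      simpa only [Real.norm_eq_abs] using
        norm_integral_le_integral_norm (μ := volume.restrict Aᶜ)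
          (fun p => (w p - γ x₀) * g N p)
    have h2 : ∫ p in Aᶜ, |(w p - γ x₀) * g N p| ≤ ∫ p in Aᶜ, (M + γ x₀) * P p := by
      apply setIntegral_mono_on (hsub_int.abs.integrableOn)
        ((hPi.const_mul (M + γ x₀)).integrableOn) hAm.compl
      intro p hp
      rw [abs_mul, abs_of_nonneg (hgnn N p)]
      have hw_abs : |w p - γ x₀| ≤ M + γ x₀ := by
        rw [abs_sub_le_iff]
        constructor
        · linarith [hwle p, hγnn x₀]
        · linarith [hwnn p, hub x₀]
      calc |w p - γ x₀| * g N p ≤ (M + γ x₀) * g N p :=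
            mul_le_mul_of_nonneg_right hw_abs (hgnn N p)
        _ ≤ (M + γ x₀) * P p := by
            apply mul_le_mul_of_nonneg_left (hkey p hp) (by linarith [hγnn x₀])
    have h3 : ∫ p in Aᶜ, (M + γ x₀) * P p ≤ (M + γ x₀) * ∫ p, P p := by
      rw [integral_const_mul]
      apply mul_le_mul_of_nonneg_left _ (by linarith [hγnn x₀])
      exact setIntegral_le_integral hPi (Filter.Eventually.of_forall hPnn)
    calc |∫ p in Aᶜ, (w p - γ x₀) * g N p| ≤ ∫ p in Aᶜ, |(w p - γ x₀) * g N p| := h1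
      _ ≤ ∫ p in Aᶜ, (M + γ x₀) * P p := h2
      _ ≤ (M + γ x₀) * ∫ p, P p := h3
      _ = (M + γ x₀) * (C * Iφ * Ih) := by rw [hPint]
  -- final estimate
  rw [Real.dist_eq]
  have hE : (∫ p, w p * g N p) - γ x₀
      = ((∫ p in A, (w p - γ x₀) * g N p) + ∫ p in Aᶜ, (w p - γ x₀) * g N p) - γ x₀ * Iφ := by
    rw [← hsplit, ← hEdiff]
    ring
  have hIφnn : 0 ≤ Iφ := hfnn N
  have hKIφ : (M + γ x₀) * (C * Iφ * Ih) + γ x₀ * Iφ = K * Iφ := by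
    rw [hKdef]; ring
  have habs : |(∫ p, w p * g N p) - γ x₀|
      ≤ |∫ p in A, (w p - γ x₀) * g N p| + |∫ p in Aᶜ, (w p - γ x₀) * g N p| + γ x₀ * Iφ := by
    rw [hE]
    calc |((∫ p in A, (w p - γ x₀) * g N p) + ∫ p in Aᶜ, (w p - γ x₀) * g N p) - γ x₀ * Iφ|
        ≤ |(∫ p in A, (w p - γ x₀) * g N p) + ∫ p in Aᶜ, (w p - γ x₀) * g N p|
          + |γ x₀ * Iφ| := abs_sub _ _
      _ ≤ |∫ p in A, (w p - γ x₀) * g N p| + |∫ p in Aᶜ, (w p - γ x₀) * g N p|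
          + |γ x₀ * Iφ| := by gcongr; exact abs_add_le _ _
      _ = |∫ p in A, (w p - γ x₀) * g N p| + |∫ p in Aᶜ, (w p - γ x₀) * g N p|
          + γ x₀ * Iφ := by
            rw [abs_of_nonneg (mul_nonneg (hγnn x₀) hIφnn)]
  have hKfin : K * Iφ ≤ ε / 4 := by
    have h1 : K * Iφ ≤ K * (ε / (4 * (K + 1))) :=
      mul_le_mul_of_nonneg_left hIφ_eps.le hKnn
    have h4 : (0:ℝ) < 4 * (K + 1) := by linarith
    have h2 : K * (ε / (4 * (K + 1))) ≤ ε / 4 := by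
      rw [← mul_div_assoc, div_le_div_iff₀ h4 (by norm_num)]
      nlinarith
    linarith
  calc |(∫ p, w p * g N p) - γ x₀|
      ≤ |∫ p in A, (w p - γ x₀) * g N p| + |∫ p in Aᶜ, (w p - γ x₀) * g N p| + γ x₀ * Iφ :=
        habs
    _ ≤ ε / 4 + ((M + γ x₀) * (C * Iφ * Ih) + γ x₀ * Iφ) := by linarith [hboundA, hboundAc]
    _ = ε / 4 + K * Iφ := by rw [hKIφ]
    _ ≤ ε / 4 + ε / 4 := by linarith [hKfin]
    _ < ε := by linarith
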